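/- Let X be a cluster-tilting subcategory of a triangulated category C with split idempotents, and let A₀ →f₀ A₁ →f₁ A₂ →f₂ ΣA₀ be a distinguished triangle in C. If both f₂ and Σ⁻¹f₂ factor through objects of X, then 0 → A₀ →f̄₀ A₁ →f̄₁ A₂ → 0 is a short exact sequence in the abelian quotient category C/X: f̄₀ is a monomorphism, f̄₁ is an epimorphism, f̄₀ is a kernel of f̄₁, and f̄₁ is a cokernel of f̄₀. -/

import Mathlib

open CategoryTheory CategoryTheory.Limits CategoryTheory.Pretriangulated

universe v u

variable {C : Type u} [Category.{v} C] [Preadditive C] [HasZeroObject C]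
  [HasShift C ℤ] [∀ n : ℤ, (shiftFunctor C n).Additive] [Pretriangulated C]

/-- `f` factors through an object satisfying `X`. -/
def FactorsThru (X : C → Prop) {A B : C} (f : A ⟶ B) : Prop :=
  ∃ (X₀ : C) (g : A ⟶ X₀) (h : X₀ ⟶ B), X X₀ ∧ g ≫ h = f

/-- The hom relation on `C` identifying two morphisms when their difference factors
through an object of `X`; the quotient category `C/X` is the quotient by this relation. -/
def homRelOf (X : C → Prop) : HomRel C :=
  fun {A B : C} (f g : A ⟶ B) => FactorsThru X (f - g)

/-- The additive quotient category `C/X`. -/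
abbrev QuotCat (X : C → Prop) := CategoryTheory.Quotient (homRelOf X)

/-- The quotient functor `C ⥤ C/X`, sending a morphism `f` to its class `f̄`. -/
abbrev quotFunctor (X : C → Prop) : C ⥤ QuotCat X := Quotient.functor _

/-- `X` is a full additive subcategory: it contains the zero objects and is closed under
isomorphisms, finite direct sums and direct summands. -/
structure IsAdditiveClosed (X : C → Prop) : Prop where
  zero : ∀ Z : C, IsZero Z → X Z
  iso : ∀ {A B : C}, (A ≅ B) → X A → X B
  biprod : ∀ {A B : C} (b : BinaryBicone A B), Nonempty b.IsBilimit → X A → X B → X b.pt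
  summand : ∀ {A B : C} (i : A ⟶ B) (p : B ⟶ A), i ≫ p = 𝟙 A → X B → X A

/-- `X` is a cluster-tilting subcategory of the triangulated category `C`:
it is a full additive subcategory such that (i) `Hom(X₁, ΣX₂) = 0` for all `X₁, X₂ ∈ X`, and
(ii) every object `A` fits into a distinguished triangle `X₀ ⟶ X₁ ⟶ A ⟶ ΣX₀` with
`X₀, X₁ ∈ X`. -/
structure IsClusterTilting (X : C → Prop) extends IsAdditiveClosed X : Prop where
  hom_shift_zero : ∀ {X₁ X₂ : C}, X X₁ → X X₂ → ∀ f : X₁ ⟶ X₂⟦(1 : ℤ)⟧, f = 0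
  exists_triangle : ∀ A : C, ∃ (X₀ X₁ : C) (f : X₀ ⟶ X₁) (g : X₁ ⟶ A) (h : A ⟶ X₀⟦(1 : ℤ)⟧),
    X X₀ ∧ X X₁ ∧ Triangle.mk f g h ∈ distTriang C

/-- `f : A ⟶ B` is `X`-monic: every morphism from `A` to an object of `X` factors through `f`. -/
def XMonic (X : C → Prop) {A B : C} (f : A ⟶ B) : Prop :=
  ∀ X' : C, X X' → ∀ u : A ⟶ X', ∃ v : B ⟶ X', f ≫ v = u

/-- `f : A ⟶ B` is `X`-epic: every morphism from an object of `X` to `B` factors through `f`. -/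
def XEpic (X : C → Prop) {A B : C} (f : A ⟶ B) : Prop :=
  ∀ X' : C, X X' → ∀ u : X' ⟶ B, ∃ v : X' ⟶ A, v ≫ f = u

/-
Since `Hom(X, ΣX) = 0`, a morphism factoring through `X` is killed by every morphism into `ΣX`
and by every morphism out of `Σ⁻¹X`. As `f₂` factors through `X`, every morphism `A₀ ⟶ X` then
extends along `f₀`; as `Σ⁻¹f₂` does, every morphism `X ⟶ A₂` lifts along `f₁`. Together with the
exactness of the triangle this makes `A₀ ⟶ A₁ ⟶ A₂` exact modulo `X` at `A₁`, whence the kernel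
and cokernel properties. For `f̄₀` monic: if `h ≫ f₀` factors through `X`, take a triangle
`Z ⟶ X₀ ⟶ X₁ ⟶ ΣZ`; the composite `Σ⁻¹X₁ ⟶ Z ⟶ A₀` is killed by `f₀`, so it factors
through `Σ⁻¹f₂` and vanishes, and `h` factors through `X₀`. Dually for `f̄₁` epic, using
`X₀ ⟶ X₁ ⟶ Z ⟶ ΣX₀`.
-/

set_option linter.unusedSectionVars false

open ZeroObject

variable {X : C → Prop}

lemma FactorsThru.comp_left {A' A B : C} (w : A' ⟶ A) {f : A ⟶ B} (hf : FactorsThru X f) :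
    FactorsThru X (w ≫ f) := by
  obtain ⟨P, g, h, hP, rfl⟩ := hf
  exact ⟨P, w ≫ g, h, hP, Category.assoc _ _ _⟩

lemma FactorsThru.comp_right {A B B' : C} {f : A ⟶ B} (hf : FactorsThru X f) (u : B ⟶ B') :
    FactorsThru X (f ≫ u) := by
  obtain ⟨P, g, h, hP, rfl⟩ := hf
  exact ⟨P, g, h ≫ u, hP, (Category.assoc _ _ _).symm⟩

lemma FactorsThru.neg {A B : C} {f : A ⟶ B} (hf : FactorsThru X f) : FactorsThru X (-f) := by
  obtain ⟨P, g, h, hP, rfl⟩ := hf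
  exact ⟨P, -g, h, hP, Preadditive.neg_comp _ _⟩

namespace IsAdditiveClosed

lemma factorsThru_zero (hX : IsAdditiveClosed X) (A B : C) : FactorsThru X (0 : A ⟶ B) :=
  ⟨0, 0, 0, hX.zero 0 (isZero_zero C), zero_comp⟩

lemma factorsThru_add (hX : IsAdditiveClosed X) {A B : C} {f g : A ⟶ B} (hf : FactorsThru X f)
    (hg : FactorsThru X g) : FactorsThru X (f + g) := by
  obtain ⟨P, f₁, f₂, hP, rfl⟩ := hf
  obtain ⟨Q, g₁, g₂, hQ, rfl⟩ := hg
  exact ⟨P ⊞ Q, biprod.lift f₁ g₁, biprod.desc f₂ g₂,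
    hX.biprod _ ⟨BinaryBiproduct.isBilimit P Q⟩ hP hQ, biprod.lift_desc⟩

lemma congruence (hX : IsAdditiveClosed X) : Congruence (homRelOf X) where
  equivalence :=
    { refl := fun _ => by simpa [homRelOf] using hX.factorsThru_zero _ _
      symm := fun h => by simpa [homRelOf] using h.neg
      trans := fun h h' => by simpa [homRelOf] using hX.factorsThru_add h h' }
  comp_left := fun {_ _ _} w {_ _} h => by
    simpa [homRelOf, Preadditive.comp_sub] using h.comp_left w
  comp_right := fun u h => by
    simpa [homRelOf, Preadditive.sub_comp] using h.comp_right u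

lemma quotFunctor_map_eq_iff (hX : IsAdditiveClosed X) {A B : C} (f g : A ⟶ B) :
    (quotFunctor X).map f = (quotFunctor X).map g ↔ FactorsThru X (f - g) :=
  haveI := hX.congruence
  Quotient.functor_map_eq_iff _ f g

lemma quotFunctor_map_eq_zero_iff (hX : IsAdditiveClosed X) {A B : C} (f : A ⟶ B) :
    (quotFunctor X).map f = (quotFunctor X).map 0 ↔ FactorsThru X f := by
  rw [hX.quotFunctor_map_eq_iff, sub_zero]

lemma mono_quotFunctor_map (hX : IsAdditiveClosed X) {A B : C} {f : A ⟶ B}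
    (hf : ∀ {Z : C} (g : Z ⟶ A), FactorsThru X (g ≫ f) → FactorsThru X g) :
    Mono ((quotFunctor X).map f) where
  right_cancellation {W} a b hab := by
    obtain ⟨W⟩ := W
    obtain ⟨a, rfl⟩ := (quotFunctor X).map_surjective a
    obtain ⟨b, rfl⟩ := (quotFunctor X).map_surjective b
    simp only [← Functor.map_comp, hX.quotFunctor_map_eq_iff, ← Preadditive.sub_comp] at hab ⊢
    exact hf _ hab

lemma epi_quotFunctor_map (hX : IsAdditiveClosed X) {A B : C} {f : A ⟶ B}
    (hf : ∀ {Z : C} (g : B ⟶ Z), FactorsThru X (f ≫ g) → FactorsThru X g) :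
    Epi ((quotFunctor X).map f) where
  left_cancellation {W} a b hab := by
    obtain ⟨W⟩ := W
    obtain ⟨a, rfl⟩ := (quotFunctor X).map_surjective a
    obtain ⟨b, rfl⟩ := (quotFunctor X).map_surjective b
    simp only [← Functor.map_comp, hX.quotFunctor_map_eq_iff, ← Preadditive.comp_sub] at hab ⊢
    exact hf _ hab

lemma existsUnique_lift (hX : IsAdditiveClosed X) {A₀ A₁ A₂ : C} {f₀ : A₀ ⟶ A₁} {f₁ : A₁ ⟶ A₂}
    [Mono ((quotFunctor X).map f₀)]
    (hlift : ∀ {Z : C} (g : Z ⟶ A₁), FactorsThru X (g ≫ f₁) →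
      ∃ ψ : Z ⟶ A₀, FactorsThru X (ψ ≫ f₀ - g))
    {Z : C} (φ : (quotFunctor X).obj Z ⟶ (quotFunctor X).obj A₁)
    (hφ : φ ≫ (quotFunctor X).map f₁ = (quotFunctor X).map (0 : Z ⟶ A₂)) :
    ∃! ψ : (quotFunctor X).obj Z ⟶ (quotFunctor X).obj A₀, ψ ≫ (quotFunctor X).map f₀ = φ := by
  obtain ⟨g, rfl⟩ := (quotFunctor X).map_surjective φ
  rw [← Functor.map_comp, hX.quotFunctor_map_eq_zero_iff] at hφ
  obtain ⟨ψ, hψ⟩ := hlift g hφ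
  have hψ : (quotFunctor X).map ψ ≫ (quotFunctor X).map f₀ = (quotFunctor X).map g := by
    rwa [← Functor.map_comp, hX.quotFunctor_map_eq_iff]
  exact ⟨_, hψ, fun ψ' hψ' => (cancel_mono _).1 (hψ'.trans hψ.symm)⟩

lemma existsUnique_desc (hX : IsAdditiveClosed X) {A₀ A₁ A₂ : C} {f₀ : A₀ ⟶ A₁} {f₁ : A₁ ⟶ A₂}
    [Epi ((quotFunctor X).map f₁)]
    (hdesc : ∀ {Z : C} (g : A₁ ⟶ Z), FactorsThru X (f₀ ≫ g) →
      ∃ ψ : A₂ ⟶ Z, FactorsThru X (f₁ ≫ ψ - g))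
    {Z : C} (φ : (quotFunctor X).obj A₁ ⟶ (quotFunctor X).obj Z)
    (hφ : (quotFunctor X).map f₀ ≫ φ = (quotFunctor X).map (0 : A₀ ⟶ Z)) :
    ∃! ψ : (quotFunctor X).obj A₂ ⟶ (quotFunctor X).obj Z, (quotFunctor X).map f₁ ≫ ψ = φ := by
  obtain ⟨g, rfl⟩ := (quotFunctor X).map_surjective φ
  rw [← Functor.map_comp, hX.quotFunctor_map_eq_zero_iff] at hφ
  obtain ⟨ψ, hψ⟩ := hdesc g hφ
  have hψ : (quotFunctor X).map f₁ ≫ (quotFunctor X).map ψ = (quotFunctor X).map g := by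
    rwa [← Functor.map_comp, hX.quotFunctor_map_eq_iff]
  exact ⟨_, hψ, fun ψ' hψ' => (cancel_epi _).1 (hψ'.trans hψ.symm)⟩

end IsAdditiveClosed

/-- The paper's `Σ⁻¹f` for `f : A ⟶ ΣB`, read as a morphism `Σ⁻¹A ⟶ B`. -/
def unshift {A B : C} (f : A ⟶ B⟦(1 : ℤ)⟧) : A⟦(-1 : ℤ)⟧ ⟶ B :=
  f⟦(-1 : ℤ)⟧' ≫ (shiftFunctorCompIsoId C (1 : ℤ) (-1 : ℤ) (add_neg_cancel 1)).hom.app B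

lemma unshift_comp {A' A B : C} (w : A' ⟶ A) (f : A ⟶ B⟦(1 : ℤ)⟧) :
    unshift (w ≫ f) = w⟦(-1 : ℤ)⟧' ≫ unshift f := by
  simp [unshift]

lemma unshift_comp_shift_map {A B B' : C} (f : A ⟶ B⟦(1 : ℤ)⟧) (u : B ⟶ B') :
    unshift (f ≫ u⟦(1 : ℤ)⟧') = unshift f ≫ u := by
  rw [unshift, unshift, Functor.map_comp, Category.assoc, Category.assoc]
  exact congrArg _
    ((shiftFunctorCompIsoId C (1 : ℤ) (-1 : ℤ) (add_neg_cancel 1)).hom.naturality u)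

lemma unshift_eq_zero_iff {A B : C} (f : A ⟶ B⟦(1 : ℤ)⟧) : unshift f = 0 ↔ f = 0 := by
  rw [unshift, Preadditive.IsIso.comp_right_eq_zero, Functor.map_eq_zero_iff]

namespace IsClusterTilting

lemma hom_shift_neg_eq_zero (hX : IsClusterTilting X) {P Q : C} (hP : X P) (hQ : X Q)
    (t : P⟦(-1 : ℤ)⟧ ⟶ Q) : t = 0 := by
  rw [← (shiftFunctor C (1 : ℤ)).map_eq_zero_iff, ← cancel_epi
    ((shiftFunctorCompIsoId C (-1 : ℤ) (1 : ℤ) (neg_add_cancel 1)).inv.app P), comp_zero]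
  exact hX.hom_shift_zero hP hQ _

lemma factorsThru_comp_eq_zero (hX : IsClusterTilting X) {A B Q : C} {f : A ⟶ B}
    (hf : FactorsThru X f) (hQ : X Q) (u : B ⟶ Q⟦(1 : ℤ)⟧) : f ≫ u = 0 := by
  obtain ⟨P, g, h, hP, rfl⟩ := hf
  rw [Category.assoc, hX.hom_shift_zero hP hQ (h ≫ u), comp_zero]

lemma comp_factorsThru_eq_zero (hX : IsClusterTilting X) {P A B : C} (hP : X P)
    (v : P⟦(-1 : ℤ)⟧ ⟶ A) {f : A ⟶ B} (hf : FactorsThru X f) : v ≫ f = 0 := by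
  obtain ⟨Q, g, h, hQ, rfl⟩ := hf
  rw [← Category.assoc, hX.hom_shift_neg_eq_zero hP hQ (v ≫ g), zero_comp]

lemma exists_triangle_left (hX : IsClusterTilting X) (Z : C) :
    ∃ (X₀ X₁ : C) (f : Z ⟶ X₀) (g : X₀ ⟶ X₁) (h : X₁ ⟶ Z⟦(1 : ℤ)⟧),
      X X₀ ∧ X X₁ ∧ Triangle.mk f g h ∈ distTriang C := by
  -- the inverse rotation of a triangle `X₀ ⟶ X₁ ⟶ ΣZ ⟶ ΣX₀`, transported along `Z ≅ Σ⁻¹ΣZ`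
  obtain ⟨X₀, X₁, f, g, h, h₀, h₁, hT⟩ := hX.exists_triangle (Z⟦(1 : ℤ)⟧)
  let e := ((shiftFunctorCompIsoId C (1 : ℤ) (-1 : ℤ) (add_neg_cancel 1)).app Z).symm
  refine ⟨X₀, X₁, e.hom ≫ (-unshift h), f, g, h₀, h₁,
    isomorphic_distinguished _ (inv_rot_of_distTriang _ hT) _
      (Triangle.isoMk _ _ e (Iso.refl _) (Iso.refl _) (Category.comp_id _)
        ((Category.comp_id _).trans (Category.id_comp _).symm) ?_)⟩
  change g ≫ ((shiftFunctorCompIsoId C (1 : ℤ) (-1 : ℤ) (add_neg_cancel 1)).inv.app Z)⟦(1 : ℤ)⟧' =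
    𝟙 _ ≫ g ≫ (shiftFunctorCompIsoId C (-1 : ℤ) (1 : ℤ) (neg_add_cancel 1)).inv.app (Z⟦(1 : ℤ)⟧)
  rw [shift_shiftFunctorCompIsoId_inv_app, Category.id_comp]

end IsClusterTilting

section Triangle

variable {A₀ A₁ A₂ : C} {f₀ : A₀ ⟶ A₁} {f₁ : A₁ ⟶ A₂} {f₂ : A₂ ⟶ A₀⟦(1 : ℤ)⟧}

lemma coyoneda_exact₁_unshift (hT : Triangle.mk f₀ f₁ f₂ ∈ distTriang C) {W : C}
    (v : W ⟶ A₀) (hv : v ≫ f₀ = 0) : ∃ k : W ⟶ A₂⟦(-1 : ℤ)⟧, v = k ≫ unshift f₂ := by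
  obtain ⟨k, hk⟩ := Triangle.coyoneda_exact₂ _ (inv_rot_of_distTriang _ hT) v hv
  exact ⟨-k, hk.trans (Preadditive.comp_neg _ _ |>.trans (Preadditive.neg_comp _ _).symm)⟩

lemma yoneda_exact₁_unshift (hT : Triangle.mk f₀ f₁ f₂ ∈ distTriang C) {W : C}
    (u : A₀ ⟶ W) (hu : unshift f₂ ≫ u = 0) : ∃ w : A₁ ⟶ W, u = f₀ ≫ w :=
  Triangle.yoneda_exact₂ _ (inv_rot_of_distTriang _ hT) u
    ((Preadditive.neg_comp _ _).trans (neg_eq_zero.2 hu))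

namespace IsClusterTilting

lemma xEpic_of_factorsThru_unshift (hX : IsClusterTilting X)
    (hT : Triangle.mk f₀ f₁ f₂ ∈ distTriang C) (hf₂ : FactorsThru X (unshift f₂)) :
    XEpic X f₁ := by
  intro P hP v
  have hv : v ≫ f₂ = 0 := by
    rw [← unshift_eq_zero_iff, unshift_comp]
    exact hX.comp_factorsThru_eq_zero hP _ hf₂
  obtain ⟨w, hw⟩ := Triangle.coyoneda_exact₃ _ hT v hv
  exact ⟨w, hw.symm⟩

lemma xMonic_of_factorsThru (hX : IsClusterTilting X)
    (hT : Triangle.mk f₀ f₁ f₂ ∈ distTriang C) (hf₂ : FactorsThru X f₂) : XMonic X f₀ := by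
  intro Q hQ u
  have hu : unshift f₂ ≫ u = 0 := by
    rw [← unshift_comp_shift_map, unshift_eq_zero_iff]
    exact hX.factorsThru_comp_eq_zero hf₂ hQ _
  obtain ⟨w, hw⟩ := yoneda_exact₁_unshift hT u hu
  exact ⟨w, hw.symm⟩

lemma factorsThru_of_factorsThru_comp_mor₁ (hX : IsClusterTilting X)
    (hT : Triangle.mk f₀ f₁ f₂ ∈ distTriang C) (hf₂ : FactorsThru X (unshift f₂))
    {Z : C} (h : Z ⟶ A₀) (hh : FactorsThru X (h ≫ f₀)) : FactorsThru X h := by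
  obtain ⟨X₀, X₁, ε, c, σ, h₀, h₁, hZ⟩ := hX.exists_triangle_left Z
  obtain ⟨k, hk⟩ := coyoneda_exact₁_unshift hT (unshift σ ≫ h)
    ((Category.assoc _ _ _).trans (hX.comp_factorsThru_eq_zero h₁ _ hh))
  have hσh : unshift σ ≫ h = 0 := hk.trans (hX.comp_factorsThru_eq_zero h₁ k hf₂)
  obtain ⟨w, hw⟩ := yoneda_exact₁_unshift hZ h hσh
  exact ⟨X₀, ε, w, h₀, hw.symm⟩

lemma factorsThru_of_factorsThru_mor₂_comp (hX : IsClusterTilting X)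
    (hT : Triangle.mk f₀ f₁ f₂ ∈ distTriang C) (hf₂ : FactorsThru X f₂)
    {Z : C} (h : A₂ ⟶ Z) (hh : FactorsThru X (f₁ ≫ h)) : FactorsThru X h := by
  obtain ⟨X₀, X₁, x, g, z, h₀, h₁, hZ⟩ := hX.exists_triangle Z
  obtain ⟨e, he⟩ : ∃ e : A₀⟦(1 : ℤ)⟧ ⟶ X₀⟦(1 : ℤ)⟧, h ≫ z = f₂ ≫ e :=
    Triangle.yoneda_exact₃ _ hT (h ≫ z)
      ((Category.assoc _ _ _).symm.trans (hX.factorsThru_comp_eq_zero hh h₀ z))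
  have hz : h ≫ z = 0 := he.trans (hX.factorsThru_comp_eq_zero hf₂ h₀ e)
  obtain ⟨w, hw⟩ := Triangle.coyoneda_exact₃ _ hZ h hz
  exact ⟨X₁, w, g, h₁, hw.symm⟩

end IsClusterTilting

lemma XEpic.exists_comp_sub_factorsThru (hT : Triangle.mk f₀ f₁ f₂ ∈ distTriang C)
    (hf₁ : XEpic X f₁) {Z : C} (g : Z ⟶ A₁) (hg : FactorsThru X (g ≫ f₁)) :
    ∃ ψ : Z ⟶ A₀, FactorsThru X (ψ ≫ f₀ - g) := by
  obtain ⟨P, u, v, hP, huv⟩ := hg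
  obtain ⟨w, rfl⟩ := hf₁ P hP v
  have hk : (g - u ≫ w) ≫ f₁ = 0 := by
    rw [Preadditive.sub_comp, Category.assoc, huv, sub_self]
  obtain ⟨ψ, hψ⟩ : ∃ ψ : Z ⟶ A₀, g - u ≫ w = ψ ≫ f₀ := Triangle.coyoneda_exact₂ _ hT _ hk
  refine ⟨ψ, P, -u, w, hP, ?_⟩
  rw [Preadditive.neg_comp, ← hψ, sub_sub_cancel_left]

lemma XMonic.exists_comp_sub_factorsThru (hT : Triangle.mk f₀ f₁ f₂ ∈ distTriang C)
    (hf₀ : XMonic X f₀) {Z : C} (g : A₁ ⟶ Z) (hg : FactorsThru X (f₀ ≫ g)) :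
    ∃ ψ : A₂ ⟶ Z, FactorsThru X (f₁ ≫ ψ - g) := by
  obtain ⟨P, u, v, hP, huv⟩ := hg
  obtain ⟨w, rfl⟩ := hf₀ P hP u
  have hk : f₀ ≫ (g - w ≫ v) = 0 := by
    rw [Preadditive.comp_sub, ← Category.assoc, huv, sub_self]
  obtain ⟨ψ, hψ⟩ : ∃ ψ : A₂ ⟶ Z, g - w ≫ v = f₁ ≫ ψ := Triangle.yoneda_exact₂ _ hT _ hk
  refine ⟨ψ, P, -w, v, hP, ?_⟩
  rw [Preadditive.neg_comp, ← hψ, sub_sub_cancel_left]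

end Triangle

/-- For a distinguished triangle `A₀ ⟶ A₁ ⟶ A₂ ⟶ ΣA₀` over a cluster-tilting
subcategory `X`, if both `f₂` and `Σ⁻¹f₂` factor through `X`, then
`0 ⟶ A₀ ⟶ A₁ ⟶ A₂ ⟶ 0` is a short exact sequence in `C/X`: `f̄₀` is a monomorphism, `f̄₁` is an
epimorphism, `f̄₀` is a kernel of `f̄₁` and `f̄₁` is a cokernel of `f̄₀`. -/
theorem short_exact_of_factorsThru
    (X : C → Prop) (hX : IsClusterTilting X)
    {A₀ A₁ A₂ : C} (f₀ : A₀ ⟶ A₁) (f₁ : A₁ ⟶ A₂) (f₂ : A₂ ⟶ A₀⟦(1 : ℤ)⟧)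
    (hT : Triangle.mk f₀ f₁ f₂ ∈ distTriang C)
    (hf₂ : FactorsThru X f₂)
    (hf₂' : FactorsThru X
      (f₂⟦(-1 : ℤ)⟧' ≫ (shiftFunctorCompIsoId C (1 : ℤ) (-1 : ℤ) (by omega)).hom.app A₀)) :
    Mono ((quotFunctor X).map f₀) ∧ Epi ((quotFunctor X).map f₁) ∧
    ((quotFunctor X).map f₀ ≫ (quotFunctor X).map f₁ = (quotFunctor X).map (0 : A₀ ⟶ A₂)) ∧
    (∀ (Z : C) (φ : (quotFunctor X).obj Z ⟶ (quotFunctor X).obj A₁),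
      φ ≫ (quotFunctor X).map f₁ = (quotFunctor X).map (0 : Z ⟶ A₂) →
      ∃! ψ : (quotFunctor X).obj Z ⟶ (quotFunctor X).obj A₀,
        ψ ≫ (quotFunctor X).map f₀ = φ) ∧
    (∀ (Z : C) (φ : (quotFunctor X).obj A₁ ⟶ (quotFunctor X).obj Z),
      (quotFunctor X).map f₀ ≫ φ = (quotFunctor X).map (0 : A₀ ⟶ Z) →
      ∃! ψ : (quotFunctor X).obj A₂ ⟶ (quotFunctor X).obj Z,
        (quotFunctor X).map f₁ ≫ ψ = φ) := by
  replace hf₂' : FactorsThru X (unshift f₂) := hf₂'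
  have hMono : Mono ((quotFunctor X).map f₀) :=
    hX.mono_quotFunctor_map (hX.factorsThru_of_factorsThru_comp_mor₁ hT hf₂')
  have hEpi : Epi ((quotFunctor X).map f₁) :=
    hX.epi_quotFunctor_map (hX.factorsThru_of_factorsThru_mor₂_comp hT hf₂)
  refine ⟨hMono, hEpi, ?_, ?_, ?_⟩
  · rw [← Functor.map_comp]
    exact congrArg _ (comp_distTriang_mor_zero₁₂ _ hT)
  · exact fun _ φ => hX.existsUnique_lift
      ((hX.xEpic_of_factorsThru_unshift hT hf₂').exists_comp_sub_factorsThru hT) φ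
  · exact fun _ φ => hX.existsUnique_desc
      ((hX.xMonic_of_factorsThru hT hf₂).exists_comp_sub_factorsThru hT) φ
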